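/- arXiv:2601.04835 — 2 statements merged into one kernel-verified Lean document; each statement's English description precedes it below -/
import Mathlib

section
/- Suppose G(V,E) is a tree, so m = |E| = |V| − 1 = n − 1. Then the map π from liquidity states to wealth distributions is injective: any two liquidity states λ, μ ∈ L_G with π(λ) = π(μ) are equal. Hence L_G is in bijection with the set W_G of feasible wealth distributions. -/
/-!
The difference `λ - μ` of two liquidity states with the same wealth distribution is a
circulation: it vanishes off the edges, is antisymmetric, and has zero net outflow at every
vertex. Summing the outflow over any set `S` of vertices, the flow inside `S` cancels, so the
flow across the cut `(S, Sᶜ)` vanishes. In a tree every edge `ab` is a bridge, and for `S` the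
component of `a` in `G - ab` the only edge across the cut is `ab` itself.
-/

open Finset

section

variable {V M : Type*} [AddCommMonoid M]

theorem Finset.sum_sum_eq_zero_of_antisymm (s : Finset V) {f : V → V → M}
    (hf : ∀ u v, f u v + f v u = 0) (hdiag : ∀ v, f v v = 0) :
    ∑ u ∈ s, ∑ v ∈ s, f u v = 0 := by
  rw [← sum_product']
  refine sum_involution (fun p _ => p.swap) (fun p _ => hf p.1 p.2) ?_ ?_ (fun p _ => p.swap_swap)
  · rintro ⟨u, v⟩ _ huv hswap
    obtain rfl : v = u := congrArg Prod.fst hswap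
    exact huv (hdiag v)
  · rintro ⟨u, v⟩ h
    exact mem_product.mpr (mem_product.mp h).symm

namespace SimpleGraph

theorem eq_of_adj_of_reachable_deleteEdges {G : SimpleGraph V} {a b u v : V}
    (hv : (G.deleteEdges {s(a, b)}).Reachable a v)
    (hu : ¬ (G.deleteEdges {s(a, b)}).Reachable a u) (hvu : G.Adj v u) : v = a ∧ u = b := by
  by_cases he : s(v, u) = s(a, b)
  · rcases Sym2.eq_iff.mp he with h | ⟨-, rfl⟩
    · exact h
    · exact absurd (Reachable.refl u) hu
  · exact absurd (hv.trans (deleteEdges_adj.mpr ⟨hvu, by simpa using he⟩).reachable) hu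

structure IsCirculation [Fintype V] (G : SimpleGraph V) (f : V → V → M) : Prop where
  eq_zero_of_not_adj : ∀ u v, ¬ G.Adj u v → f u v = 0
  add_swap_eq_zero : ∀ u v, f u v + f v u = 0
  sum_eq_zero : ∀ v, ∑ u, f v u = 0

variable [Fintype V] {G : SimpleGraph V} {f : V → V → M}

theorem IsCirculation.sum_sum_compl_eq_zero [DecidableEq V] (hf : G.IsCirculation f)
    (s : Finset V) : ∑ v ∈ s, ∑ u ∈ sᶜ, f v u = 0 := by
  have hinner : ∑ v ∈ s, ∑ u ∈ s, f v u = 0 :=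
    s.sum_sum_eq_zero_of_antisymm hf.add_swap_eq_zero
      fun v => hf.eq_zero_of_not_adj v v G.irrefl
  calc ∑ v ∈ s, ∑ u ∈ sᶜ, f v u
      = ∑ v ∈ s, ∑ u ∈ s, f v u + ∑ v ∈ s, ∑ u ∈ sᶜ, f v u := by
        rw [hinner, zero_add]
    _ = ∑ v ∈ s, ∑ u, f v u := by simp only [← sum_add_distrib, sum_add_sum_compl]
    _ = 0 := Finset.sum_eq_zero fun v _ => hf.sum_eq_zero v

theorem IsCirculation.eq_zero_of_isBridge (hf : G.IsCirculation f) {a b : V}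
    (hab : G.IsBridge s(a, b)) : f a b = 0 := by
  classical
  set s := univ.filter fun v => (G.deleteEdges {s(a, b)}).Reachable a v
  have hb : b ∉ s := by simpa [s] using isBridge_iff.mp hab
  have ha : a ∈ s := by simp [s]
  calc f a b = ∑ v ∈ s, ∑ u ∈ sᶜ, f v u := by
        rw [← sum_product',
          sum_eq_single_of_mem (a, b) (mem_product.mpr ⟨ha, mem_compl.mpr hb⟩)]
        rintro ⟨v, u⟩ hp hne
        obtain ⟨hv, hu⟩ := mem_product.mp hp
        by_contra hvu
        obtain ⟨rfl, rfl⟩ := eq_of_adj_of_reachable_deleteEdges (by simpa [s] using hv)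
          (by simpa [s] using hu) (not_imp_comm.mp (hf.eq_zero_of_not_adj v u) hvu)
        exact hne rfl
    _ = 0 := hf.sum_sum_compl_eq_zero s

theorem IsAcyclic.eq_zero_of_isCirculation (hG : G.IsAcyclic) (hf : G.IsCirculation f) :
    f = 0 := by
  funext a b
  by_cases hab : G.Adj a b
  · exact hf.eq_zero_of_isBridge (isAcyclic_iff_forall_adj_isBridge.mp hG hab)
  · exact hf.eq_zero_of_not_adj a b hab

end SimpleGraph

end

theorem tree_liquidity_injective_general
    {V : Type*} [Fintype V]
    (G : SimpleGraph V) (hT : G.IsTree)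
    (cap : V → V → ℕ) (lam mu : V → V → ℕ)
    (hlam : ∀ u v, G.Adj u v → lam u v + lam v u = cap u v)
    (hlam0 : ∀ u v, ¬ G.Adj u v → lam u v = 0)
    (hmu : ∀ u v, G.Adj u v → mu u v + mu v u = cap u v)
    (hmu0 : ∀ u v, ¬ G.Adj u v → mu u v = 0)
    (hπ : ∀ v : V, (∑ u, lam v u) = ∑ u, mu v u) :
    lam = mu := by
  set f : V → V → ℤ := fun u v => lam u v - mu u v
  have hf : G.IsCirculation f := by
    refine ⟨fun u v huv => ?_, fun u v => ?_, fun v => ?_⟩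
    · simp [f, hlam0 u v huv, hmu0 u v huv]
    · by_cases huv : G.Adj u v
      · have := hlam u v huv
        have := hmu u v huv
        simp only [f]
        omega
      · have hvu : ¬ G.Adj v u := fun h => huv h.symm
        simp [f, hlam0 u v huv, hlam0 v u hvu, hmu0 u v huv, hmu0 v u hvu]
    · simp only [f, sum_sub_distrib, sub_eq_zero]
      exact_mod_cast hπ v
  funext u v
  have huv : f u v = 0 := congrFun (congrFun (hT.isAcyclic.eq_zero_of_isCirculation hf) u) v
  simp only [f, sub_eq_zero] at huv
  exact_mod_cast huv

/-- On a tree, the projection from liquidity states to wealth distributions is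
injective: two liquidity states with the same induced wealth distribution are
equal.  (Hence liquidity states are in bijection with the feasible wealth
distributions.) -/
theorem tree_liquidity_injective
    {V : Type*} [Fintype V] [DecidableEq V]
    (G : SimpleGraph V) [DecidableRel G.Adj] (hT : G.IsTree)
    (cap : V → V → ℕ) (lam mu : V → V → ℕ)
    (hlam : ∀ u v, G.Adj u v → lam u v + lam v u = cap u v)
    (hlam0 : ∀ u v, ¬ G.Adj u v → lam u v = 0)
    (hmu : ∀ u v, G.Adj u v → mu u v + mu v u = cap u v)
    (hmu0 : ∀ u v, ¬ G.Adj u v → mu u v = 0)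
    (hπ : ∀ v : V, (∑ u, lam v u) = ∑ u, mu v u) :
    lam = mu :=
  tree_liquidity_injective_general G hT cap lam mu hlam hlam0 hmu hmu0 hπ
end

section
/- Let C = (v_0, v_1, ..., v_ℓ = v_0) be a cycle of channels e_i = (v_i, v_{i+1}) with fee function f, and let λ be a liquidity state in which no channel of C is depleted (λ(e_i, v_i) ≥ 1 and λ(e_i, v_{i+1}) ≥ 1 for all i). If λ maximizes the network fee potential p_G(λ) = ∑_{e∈E} ∑_{v∈e} f(e,v)·λ(e,v) among liquidity states with the same induced wealth distribution, then ∑_{i=0}^{ℓ−1} ( f(e_i, v_i) − f(e_i, v_{i+1}) ) = 0. -/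
/-- Cycle fee-balance lemma: if a liquidity state maximizes the network fee
potential among all states with the same induced wealth distribution, and a
cycle of channels `γ` is nowhere depleted, then the fee differences around the
cycle sum to zero. -/
theorem cycle_fee_balance
    {V E : Type*} [Fintype V] [Fintype E] [DecidableEq V] [DecidableEq E]
    (fst snd : E → V) (cap : E → ℕ) (fee : E → V → ℕ)
    (lam : E → ℕ × ℕ) (hlam : ∀ e, (lam e).1 + (lam e).2 = cap e)
    (ℓ : ℕ) [NeZero ℓ] (hℓ : 1 ≤ ℓ) (γ : Fin ℓ → E) (hinj : Function.Injective γ)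
    (hcyc : ∀ i : Fin ℓ, snd (γ i) = fst (γ (i + 1)))
    (hdep1 : ∀ i, 1 ≤ (lam (γ i)).1) (hdep2 : ∀ i, 1 ≤ (lam (γ i)).2)
    (hmax : ∀ mu : E → ℕ × ℕ, (∀ e, (mu e).1 + (mu e).2 = cap e) →
      (∀ v : V,
        (∑ e, ((if fst e = v then (mu e).1 else 0) +
               (if snd e = v then (mu e).2 else 0)))
          = ∑ e, ((if fst e = v then (lam e).1 else 0) +
                  (if snd e = v then (lam e).2 else 0))) →
      (∑ e, (fee e (fst e) * (mu e).1 + fee e (snd e) * (mu e).2)) ≤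
      (∑ e, (fee e (fst e) * (lam e).1 + fee e (snd e) * (lam e).2))) :
    (∑ i : Fin ℓ, ((fee (γ i) (fst (γ i)) : ℤ) - (fee (γ i) (snd (γ i)) : ℤ))) = 0 := by
  classical
  set R : Finset E := Finset.univ.image γ with hR
  have hmemR : ∀ i, γ i ∈ R := fun i => Finset.mem_image_of_mem _ (Finset.mem_univ i)
  have hRmem : ∀ e, e ∈ R → ∃ i, γ i = e := by
    intro e he
    rcases Finset.mem_image.mp he with ⟨i, _, hi⟩
    exact ⟨i, hi⟩
  have hsum_img : ∀ (M : Type) [AddCommMonoid M], ∀ (g : E → M),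
      ∑ e ∈ R, g e = ∑ i, g (γ i) := by
    intro M _ g
    exact Finset.sum_image (fun a _ b _ h => hinj h)
  have keyA : ∀ (F : V → ℕ), ∑ i, F (fst (γ i)) = ∑ i, F (snd (γ i)) := by
    intro F
    have h1 : ∑ i, F (snd (γ i)) = ∑ i, F (fst (γ (i + 1))) :=
      Finset.sum_congr rfl (fun i _ => by rw [hcyc i])
    rw [h1]
    exact (Fintype.sum_equiv (Equiv.addRight (1 : Fin ℓ))
      (fun i => F (fst (γ (i + 1)))) (fun i => F (fst (γ i))) (fun i => rfl)).symm
  -- the two perturbed states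
  set mup : E → ℕ × ℕ :=
    fun e => if e ∈ R then ((lam e).1 - 1, (lam e).2 + 1) else lam e with hmup
  set mum : E → ℕ × ℕ :=
    fun e => if e ∈ R then ((lam e).1 + 1, (lam e).2 - 1) else lam e with hmum
  -- capacity feasibility
  have hcapp : ∀ e, (mup e).1 + (mup e).2 = cap e := by
    intro e
    by_cases he : e ∈ R
    · rcases hRmem e he with ⟨i, rfl⟩
      have h1 := hdep1 i
      have h2 := hlam (γ i)
      simp only [hmup, he, if_pos]
      omega
    · simp [hmup, he, hlam e]
  have hcapm : ∀ e, (mum e).1 + (mum e).2 = cap e := by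
    intro e
    by_cases he : e ∈ R
    · rcases hRmem e he with ⟨i, rfl⟩
      have h2 := hdep2 i
      have h3 := hlam (γ i)
      simp only [hmum, he, if_pos]
      omega
    · simp [hmum, he, hlam e]
  -- wealth preservation
  have hwealth : ∀ (mu : E → ℕ × ℕ),
      (∀ i, (mu (γ i)).1 + 1 = (lam (γ i)).1 + (if True then 1 else 0) ∨ True) → True := fun _ _ => trivial
  have hw : ∀ (mu : E → ℕ × ℕ), (∀ e, e ∉ R → mu e = lam e) →
      (∀ i, ∑ j, ((if fst (γ j) = fst (γ i) then (mu (γ j)).1 else 0) +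
          (if snd (γ j) = fst (γ i) then (mu (γ j)).2 else 0)) = 0 ∨ True) → True := fun _ _ _ => trivial
  have hwp : ∀ v : V,
      (∑ e, ((if fst e = v then (mup e).1 else 0) +
             (if snd e = v then (mup e).2 else 0)))
        = ∑ e, ((if fst e = v then (lam e).1 else 0) +
                (if snd e = v then (lam e).2 else 0)) := by
    intro v
    rw [← Finset.sum_compl_add_sum R, ← Finset.sum_compl_add_sum R
      (f := fun e => ((if fst e = v then (lam e).1 else 0) +
                (if snd e = v then (lam e).2 else 0)))]
    have hc : ∑ e ∈ Rᶜ, ((if fst e = v then (mup e).1 else 0) +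
             (if snd e = v then (mup e).2 else 0))
        = ∑ e ∈ Rᶜ, ((if fst e = v then (lam e).1 else 0) +
                (if snd e = v then (lam e).2 else 0)) := by
      apply Finset.sum_congr rfl
      intro e he
      have : e ∉ R := Finset.mem_compl.mp he
      simp [hmup, this]
    rw [hc, hsum_img ℕ, hsum_img ℕ]
    have hterm : ∀ i : Fin ℓ, (mup (γ i)) = ((lam (γ i)).1 - 1, (lam (γ i)).2 + 1) := by
      intro i; simp [hmup, hmemR i]
    simp only [hterm]
    rw [Finset.sum_add_distrib, Finset.sum_add_distrib]
    have h1 : ∑ i, (if fst (γ i) = v then (lam (γ i)).1 - 1 else 0)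
        + ∑ i, (if fst (γ i) = v then 1 else 0)
        = ∑ i, (if fst (γ i) = v then (lam (γ i)).1 else 0) := by
      rw [← Finset.sum_add_distrib]
      apply Finset.sum_congr rfl
      intro i _
      have := hdep1 i
      split <;> omega
    have h2 : ∑ i, (if snd (γ i) = v then (lam (γ i)).2 + 1 else 0)
        = ∑ i, (if snd (γ i) = v then (lam (γ i)).2 else 0)
        + ∑ i, (if snd (γ i) = v then 1 else 0) := by
      rw [← Finset.sum_add_distrib]
      apply Finset.sum_congr rfl
      intro i _
      split <;> omega
    have h3 : ∑ i, (if fst (γ i) = v then 1 else 0)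
        = ∑ i, (if snd (γ i) = v then 1 else 0) :=
      keyA (fun u => if u = v then 1 else 0)
    have h4 : ∑ i, ((if fst (γ i) = v then (lam (γ i)).1 else 0) +
        (if snd (γ i) = v then (lam (γ i)).2 else 0))
        = (∑ i, (if fst (γ i) = v then (lam (γ i)).1 else 0)) +
          ∑ i, (if snd (γ i) = v then (lam (γ i)).2 else 0) := Finset.sum_add_distrib
    omega
  have hwm : ∀ v : V,
      (∑ e, ((if fst e = v then (mum e).1 else 0) +
             (if snd e = v then (mum e).2 else 0)))
        = ∑ e, ((if fst e = v then (lam e).1 else 0) +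
                (if snd e = v then (lam e).2 else 0)) := by
    intro v
    rw [← Finset.sum_compl_add_sum R, ← Finset.sum_compl_add_sum R
      (f := fun e => ((if fst e = v then (lam e).1 else 0) +
                (if snd e = v then (lam e).2 else 0)))]
    have hc : ∑ e ∈ Rᶜ, ((if fst e = v then (mum e).1 else 0) +
             (if snd e = v then (mum e).2 else 0))
        = ∑ e ∈ Rᶜ, ((if fst e = v then (lam e).1 else 0) +
                (if snd e = v then (lam e).2 else 0)) := by
      apply Finset.sum_congr rfl
      intro e he
      have : e ∉ R := Finset.mem_compl.mp he
      simp [hmum, this]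
    rw [hc, hsum_img ℕ, hsum_img ℕ]
    have hterm : ∀ i : Fin ℓ, (mum (γ i)) = ((lam (γ i)).1 + 1, (lam (γ i)).2 - 1) := by
      intro i; simp [hmum, hmemR i]
    simp only [hterm]
    rw [Finset.sum_add_distrib, Finset.sum_add_distrib]
    have h1 : ∑ i, (if fst (γ i) = v then (lam (γ i)).1 + 1 else 0)
        = ∑ i, (if fst (γ i) = v then (lam (γ i)).1 else 0)
        + ∑ i, (if fst (γ i) = v then 1 else 0) := by
      rw [← Finset.sum_add_distrib]
      apply Finset.sum_congr rfl
      intro i _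
      split <;> omega
    have h2 : ∑ i, (if snd (γ i) = v then (lam (γ i)).2 - 1 else 0)
        + ∑ i, (if snd (γ i) = v then 1 else 0)
        = ∑ i, (if snd (γ i) = v then (lam (γ i)).2 else 0) := by
      rw [← Finset.sum_add_distrib]
      apply Finset.sum_congr rfl
      intro i _
      have := hdep2 i
      split <;> omega
    have h3 : ∑ i, (if fst (γ i) = v then 1 else 0)
        = ∑ i, (if snd (γ i) = v then 1 else 0) :=
      keyA (fun u => if u = v then 1 else 0)
    have h4 : ∑ i, ((if fst (γ i) = v then (lam (γ i)).1 else 0) +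
        (if snd (γ i) = v then (lam (γ i)).2 else 0))
        = (∑ i, (if fst (γ i) = v then (lam (γ i)).1 else 0)) +
          ∑ i, (if snd (γ i) = v then (lam (γ i)).2 else 0) := Finset.sum_add_distrib
    omega
  -- potentials
  set A : ℕ := ∑ i, fee (γ i) (fst (γ i)) with hA
  set B : ℕ := ∑ i, fee (γ i) (snd (γ i)) with hB
  set P : (E → ℕ × ℕ) → ℕ :=
    fun mu => ∑ e, (fee e (fst e) * (mu e).1 + fee e (snd e) * (mu e).2) with hP
  have hsplit : ∀ mu : E → ℕ × ℕ, P mu = (∑ e ∈ Rᶜ, (fee e (fst e) * (mu e).1 + fee e (snd e) * (mu e).2))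
      + ∑ i, (fee (γ i) (fst (γ i)) * (mu (γ i)).1 + fee (γ i) (snd (γ i)) * (mu (γ i)).2) := by
    intro mu
    simp only [hP]
    rw [← Finset.sum_compl_add_sum R, hsum_img ℕ]
  have hPp : P mup + A = P lam + B := by
    rw [hsplit mup, hsplit lam]
    have hc : ∑ e ∈ Rᶜ, (fee e (fst e) * (mup e).1 + fee e (snd e) * (mup e).2)
        = ∑ e ∈ Rᶜ, (fee e (fst e) * (lam e).1 + fee e (snd e) * (lam e).2) := by
      apply Finset.sum_congr rfl
      intro e he
      have : e ∉ R := Finset.mem_compl.mp he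
      simp [hmup, this]
    rw [hc]
    have hterm : ∀ i : Fin ℓ,
        fee (γ i) (fst (γ i)) * (mup (γ i)).1 + fee (γ i) (snd (γ i)) * (mup (γ i)).2
          + fee (γ i) (fst (γ i))
        = fee (γ i) (fst (γ i)) * (lam (γ i)).1 + fee (γ i) (snd (γ i)) * (lam (γ i)).2
          + fee (γ i) (snd (γ i)) := by
      intro i
      obtain ⟨k, hk⟩ := Nat.exists_eq_add_of_le (hdep1 i)
      have hmu : mup (γ i) = ((lam (γ i)).1 - 1, (lam (γ i)).2 + 1) := by
        simp [hmup, hmemR i]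
      rw [hmu, hk]
      simp only [Nat.add_sub_cancel_left]
      ring
    have hsum : (∑ i, (fee (γ i) (fst (γ i)) * (mup (γ i)).1
          + fee (γ i) (snd (γ i)) * (mup (γ i)).2)) + A
        = (∑ i, (fee (γ i) (fst (γ i)) * (lam (γ i)).1
          + fee (γ i) (snd (γ i)) * (lam (γ i)).2)) + B := by
      rw [hA, hB, ← Finset.sum_add_distrib, ← Finset.sum_add_distrib]
      exact Finset.sum_congr rfl (fun i _ => hterm i)
    omega
  have hPm : P mum + B = P lam + A := by
    rw [hsplit mum, hsplit lam]
    have hc : ∑ e ∈ Rᶜ, (fee e (fst e) * (mum e).1 + fee e (snd e) * (mum e).2)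
        = ∑ e ∈ Rᶜ, (fee e (fst e) * (lam e).1 + fee e (snd e) * (lam e).2) := by
      apply Finset.sum_congr rfl
      intro e he
      have : e ∉ R := Finset.mem_compl.mp he
      simp [hmum, this]
    rw [hc]
    have hterm : ∀ i : Fin ℓ,
        fee (γ i) (fst (γ i)) * (mum (γ i)).1 + fee (γ i) (snd (γ i)) * (mum (γ i)).2
          + fee (γ i) (snd (γ i))
        = fee (γ i) (fst (γ i)) * (lam (γ i)).1 + fee (γ i) (snd (γ i)) * (lam (γ i)).2
          + fee (γ i) (fst (γ i)) := by
      intro i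
      obtain ⟨k, hk⟩ := Nat.exists_eq_add_of_le (hdep2 i)
      have hmu : mum (γ i) = ((lam (γ i)).1 + 1, (lam (γ i)).2 - 1) := by
        simp [hmum, hmemR i]
      rw [hmu, hk]
      simp only [Nat.add_sub_cancel_left]
      ring
    have hsum : (∑ i, (fee (γ i) (fst (γ i)) * (mum (γ i)).1
          + fee (γ i) (snd (γ i)) * (mum (γ i)).2)) + B
        = (∑ i, (fee (γ i) (fst (γ i)) * (lam (γ i)).1
          + fee (γ i) (snd (γ i)) * (lam (γ i)).2)) + A := by
      rw [hA, hB, ← Finset.sum_add_distrib, ← Finset.sum_add_distrib]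
      exact Finset.sum_congr rfl (fun i _ => hterm i)
    omega
  have hle1 : P mup ≤ P lam := hmax mup hcapp hwp
  have hle2 : P mum ≤ P lam := hmax mum hcapm hwm
  have hAB : A = B := by omega
  have : (∑ i : Fin ℓ, ((fee (γ i) (fst (γ i)) : ℤ) - (fee (γ i) (snd (γ i)) : ℤ)))
      = (A : ℤ) - (B : ℤ) := by
    rw [Finset.sum_sub_distrib, hA, hB]
    push_cast
    ring
  rw [this, hAB]
  ring
end
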